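/- arXiv:1507.00558 — 5 statements merged into one kernel-verified Lean document; each statement's English description precedes it below -/
import Mathlib

section
/- Let N ≥ 1 and let U, V be N×N unitary matrices. If |a* U b| = |a* V b| for all unit vectors a, b ∈ ℂ^N, then there exists λ ∈ ℂ with |λ| = 1 such that U = λ V. -/
/-!
Taking `a = V b` in the hypothesis gives `|⟪V b, U b⟫| = 1` for every unit vector `b`, so by the
equality case of Cauchy–Schwarz `U b` is a multiple of `V b`. Thus every vector is an eigenvector of
`V⁻¹ U`, which is therefore a scalar `λ`, and `|λ| = 1` since `U = λ V` are both unitary.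
-/

open Matrix
open scoped InnerProductSpace

section InnerProductSpace

variable {𝕜 E : Type*} [RCLike 𝕜] [NormedAddCommGroup E] [InnerProductSpace 𝕜 E]

theorem eq_inner_smul_of_norm_inner_eq_one {x y : E} (hx : ‖x‖ = 1) (hy : ‖y‖ = 1)
    (h : ‖⟪x, y⟫_𝕜‖ = 1) : y = ⟪x, y⟫_𝕜 • x := by
  have hxx : ⟪x, x⟫_𝕜 = 1 := by rw [inner_self_eq_norm_sq_to_K, hx]; simp
  have hx0 : x ≠ 0 := norm_ne_zero_iff.mp (by rw [hx]; exact one_ne_zero)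
  have := ((norm_inner_eq_norm_tfae 𝕜 x y).out 0 1).mp (by rw [h, hx, hy, one_mul])
  rwa [hxx, div_one, or_iff_right hx0] at this

theorem LinearMap.exists_apply_eq_smul_of_forall_norm_eq_one {f : E →ₗ[𝕜] E}
    (h : ∀ b : E, ‖b‖ = 1 → ∃ c : 𝕜, f b = c • b) (x : E) : ∃ c : 𝕜, f x = c • x := by
  rcases eq_or_ne x 0 with rfl | hx
  · exact ⟨0, by simp⟩
  obtain ⟨c, hc⟩ := h _ (norm_smul_inv_norm (𝕜 := 𝕜) hx)
  have hx' : (‖x‖ : 𝕜)⁻¹ ≠ 0 := inv_ne_zero (by exact_mod_cast norm_ne_zero_iff.mpr hx)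
  rw [map_smul, smul_comm] at hc
  exact ⟨c, smul_right_injective E hx' hc⟩

end InnerProductSpace

theorem LinearMap.exists_eq_smul_id_of_forall_exists_smul {K V : Type*} [Field K]
    [AddCommGroup V] [Module K V] {f : V →ₗ[K] V} (h : ∀ v, ∃ c : K, f v = c • v) :
    ∃ a : K, f = a • 1 := by
  refine exists_eq_smul_id_of_forall_notLinearIndependent fun v hli => ?_
  obtain ⟨c, hc⟩ := h v
  have := LinearIndependent.pair_iff.mp hli c (-1) (by simp [hc])
  exact one_ne_zero (neg_eq_zero.mp this.2)

namespace ContinuousLinearMap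

variable {𝕜 H : Type*} [RCLike 𝕜] [NormedAddCommGroup H] [InnerProductSpace 𝕜 H] [CompleteSpace H]

theorem exists_norm_eq_one_smul_of_norm_inner_eq [Nontrivial H] {u v : H →L[𝕜] H}
    (hu : u ∈ unitary (H →L[𝕜] H)) (hv : v ∈ unitary (H →L[𝕜] H))
    (h : ∀ a b : H, ‖a‖ = 1 → ‖b‖ = 1 → ‖⟪a, u b⟫_𝕜‖ = ‖⟪a, v b⟫_𝕜‖) :
    ∃ μ : 𝕜, ‖μ‖ = 1 ∧ u = μ • v := by
  have hcol (b : H) (hb : ‖b‖ = 1) : ∃ t : 𝕜, (star v * u) b = t • b := by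
    have hub : ‖u b‖ = 1 := by rw [norm_map_of_mem_unitary hu, hb]
    have hvb : ‖v b‖ = 1 := by rw [norm_map_of_mem_unitary hv, hb]
    have hinner : ‖⟪v b, u b⟫_𝕜‖ = 1 := by
      rw [h _ _ hvb hb, inner_self_eq_norm_sq_to_K, hvb]; simp
    set t := ⟪v b, u b⟫_𝕜
    refine ⟨t, ?_⟩
    rw [mul_apply_eq_comp, eq_inner_smul_of_norm_inner_eq_one hvb hub hinner, map_smul,
      ← mul_apply_eq_comp, Unitary.star_mul_self_of_mem hv]
    rfl
  obtain ⟨μ, hμ⟩ := LinearMap.exists_eq_smul_id_of_forall_exists_smul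
    (LinearMap.exists_apply_eq_smul_of_forall_norm_eq_one
      (f := ((star v * u : H →L[𝕜] H) : H →ₗ[𝕜] H)) hcol)
  have huv : u = μ • v := by
    rw [← one_mul u, ← Unitary.mul_star_self_of_mem hv, mul_assoc,
      show star v * u = μ • 1 from coe_injective hμ, mul_smul_comm, mul_one]
  refine ⟨μ, ?_, huv⟩
  have := congrArg norm huv
  rwa [norm_smul, CStarRing.norm_of_mem_unitary hu, CStarRing.norm_of_mem_unitary hv, mul_one,
    eq_comm] at this

end ContinuousLinearMap

theorem Matrix.inner_toEuclideanCLM_eq_star_dotProduct {𝕜 n : Type*} [RCLike 𝕜] [Fintype n]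
    [DecidableEq n] (A : Matrix n n 𝕜) (x y : EuclideanSpace 𝕜 n) :
    ⟪x, toEuclideanCLM (n := n) (𝕜 := 𝕜) A y⟫_𝕜 = star x.ofLp ⬝ᵥ A *ᵥ y.ofLp := by
  rw [EuclideanSpace.inner_eq_star_dotProduct, ofLp_toEuclideanCLM, dotProduct_comm]

theorem stmt_0 {N : ℕ} (hN : 1 ≤ N) (U V : Matrix (Fin N) (Fin N) ℂ)
    (hU : Uᴴ * U = 1) (hV : Vᴴ * V = 1)
    (h : ∀ a b : Fin N → ℂ, star a ⬝ᵥ a = 1 → star b ⬝ᵥ b = 1 →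
      ‖star a ⬝ᵥ U.mulVec b‖ = ‖star a ⬝ᵥ V.mulVec b‖) :
    ∃ lam : ℂ, ‖lam‖ = 1 ∧ U = lam • V := by
  have : Nonempty (Fin N) := ⟨⟨0, hN⟩⟩
  have hunit (A : Matrix (Fin N) (Fin N) ℂ) (hA : Aᴴ * A = 1) :
      toEuclideanCLM (𝕜 := ℂ) A ∈ unitary _ :=
    Unitary.map_mem _ (mem_unitaryGroup_iff'.mpr hA)
  have hnorm (x : EuclideanSpace ℂ (Fin N)) (hx : ‖x‖ = 1) : star x.ofLp ⬝ᵥ x.ofLp = 1 := by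
    rw [dotProduct_comm, ← EuclideanSpace.inner_eq_star_dotProduct, inner_self_eq_norm_sq_to_K, hx]
    simp
  obtain ⟨lam, hlam, hUV⟩ := ContinuousLinearMap.exists_norm_eq_one_smul_of_norm_inner_eq
    (hunit U hU) (hunit V hV) fun a b ha hb => by
      simpa only [inner_toEuclideanCLM_eq_star_dotProduct] using h _ _ (hnorm a ha) (hnorm b hb)
  exact ⟨lam, hlam, EquivLike.injective (toEuclideanCLM (𝕜 := ℂ)) (by rw [map_smul]; exact hUV)⟩
end

section
/- Let U, V ∈ U(2) be 2×2 unitary matrices and e₁, e₂ the standard basis of ℂ². Then |a* U e₁| = |a* V e₁| for both a ∈ {e₁, e₂} if and only if there exist real angles α, β, θ such that V = e^{iθ} · diag(e^{iα}, e^{-iα}) · U · diag(e^{iβ}, e^{-iβ}). -/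
/-!
A matrix in `U(2)` is determined by its first column and its determinant, since
`adjugate U = det U • Uᴴ`. If the first columns of `U` and `V` agree in modulus, they differ
entrywise by phases `e^{iφ₀}, e^{iφ₁}`, and `det V = e^{iψ} det U`. The angles
`θ = ψ / 2`, `α = (φ₀ - φ₁) / 2`, `β = (φ₀ + φ₁ - ψ) / 2` make
`e^{iθ} diag(e^{iα}, e^{-iα}) U diag(e^{iβ}, e^{-iβ})` a unitary matrix with the first column
and the determinant of `V`, hence equal to `V`.
-/

namespace Matrix

section UnitaryGroup

variable {n α : Type*} [Fintype n] [DecidableEq n] [CommRing α] [StarRing α]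

theorem adjugate_eq_det_smul_star_of_mem_unitaryGroup {U : Matrix n n α}
    (hU : U ∈ unitaryGroup n α) : adjugate U = U.det • star U :=
  calc adjugate U = adjugate U * (U * star U) := by rw [mem_unitaryGroup_iff.mp hU, mul_one]
    _ = U.det • star U := by rw [← Matrix.mul_assoc, adjugate_mul, smul_one_mul]

theorem col_one_eq_of_mem_unitaryGroup_fin_two {U : Matrix (Fin 2) (Fin 2) α}
    (hU : U ∈ unitaryGroup (Fin 2) α) :
    U 0 1 = -(U.det * star (U 1 0)) ∧ U 1 1 = U.det * star (U 0 0) := by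
  have h := adjugate_eq_det_smul_star_of_mem_unitaryGroup hU
  rw [adjugate_fin_two] at h
  exact ⟨neg_eq_iff_eq_neg.mp (congrFun (congrFun h 0) 1), congrFun (congrFun h 0) 0⟩

theorem eq_of_mem_unitaryGroup_fin_two_of_col_zero_eq_of_det_eq
    {U V : Matrix (Fin 2) (Fin 2) α} (hU : U ∈ unitaryGroup (Fin 2) α)
    (hV : V ∈ unitaryGroup (Fin 2) α) (hcol : ∀ i, U i 0 = V i 0) (hdet : U.det = V.det) :
    U = V := by
  obtain ⟨hU₀₁, hU₁₁⟩ := col_one_eq_of_mem_unitaryGroup_fin_two hU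
  obtain ⟨hV₀₁, hV₁₁⟩ := col_one_eq_of_mem_unitaryGroup_fin_two hV
  ext i j
  fin_cases i <;> fin_cases j
  · exact hcol 0
  · simp [hU₀₁, hV₀₁, hdet, hcol 1]
  · exact hcol 1
  · simp [hU₁₁, hV₁₁, hdet, hcol 0]

theorem diagonal_mem_unitaryGroup {d : n → α} (hd : ∀ i, d i ∈ unitary α) :
    diagonal d ∈ unitaryGroup n α := by
  rw [mem_unitaryGroup_iff', star_eq_conjTranspose, diagonal_conjTranspose,
    diagonal_mul_diagonal, ← diagonal_one]
  exact congrArg diagonal (funext fun i => Unitary.star_mul_self_of_mem (hd i))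

end UnitaryGroup

theorem star_single_one_dotProduct_mulVec_single_one {n α : Type*} [Fintype n]
    [DecidableEq n] [CommRing α] [StarRing α] (M : Matrix n n α) (i j : n) :
    star (Pi.single i 1 : n → α) ⬝ᵥ M *ᵥ Pi.single j 1 = M i j := by
  simp [Pi.star_single]

end Matrix

namespace Complex

open Matrix

theorem exp_ofReal_mul_I_mem_unitary (x : ℝ) : exp (x * I) ∈ unitary ℂ := by
  rw [Unitary.mem_iff_star_mul_self, star_def, ← exp_conj, ← exp_add]
  simp

theorem exists_exp_ofReal_mul_I_mul_eq_of_norm_eq {z w : ℂ} (h : ‖z‖ = ‖w‖) :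
    ∃ φ : ℝ, w = exp (φ * I) * z := by
  refine ⟨w.arg - z.arg, ?_⟩
  calc w = ‖w‖ * exp (w.arg * I) := (norm_mul_exp_arg_mul_I w).symm
    _ = exp ((w.arg - z.arg : ℝ) * I) * (‖z‖ * exp (z.arg * I)) := by
      rw [h, mul_left_comm, ← exp_add]
      push_cast
      ring_nf
    _ = exp ((w.arg - z.arg : ℝ) * I) * z := by rw [norm_mul_exp_arg_mul_I]

theorem diagonal_exp_mul_I_mem_unitaryGroup (α : ℝ) :
    diagonal ![exp (α * I), exp (-α * I)] ∈ unitaryGroup (Fin 2) ℂ :=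
  diagonal_mem_unitaryGroup fun i => by
    fin_cases i
    · exact exp_ofReal_mul_I_mem_unitary α
    · simpa using exp_ofReal_mul_I_mem_unitary (-α)

theorem det_diagonal_exp_mul_I (α : ℝ) : det (diagonal ![exp (α * I), exp (-α * I)]) = 1 := by
  simp [← exp_add]

end Complex

open Matrix

theorem stmt_1 (U V : Matrix (Fin 2) (Fin 2) ℂ)
    (hU : Uᴴ * U = 1) (hV : Vᴴ * V = 1) :
    (∀ i : Fin 2,
        ‖star (Pi.single i 1 : Fin 2 → ℂ) ⬝ᵥ U.mulVec (Pi.single 0 1)‖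
          = ‖star (Pi.single i 1 : Fin 2 → ℂ) ⬝ᵥ V.mulVec (Pi.single 0 1)‖)
      ↔
    (∃ α β θ : ℝ,
      V = Complex.exp (θ * Complex.I) •
        (Matrix.diagonal ![Complex.exp (α * Complex.I), Complex.exp (-α * Complex.I)] * U *
          Matrix.diagonal ![Complex.exp (β * Complex.I), Complex.exp (-β * Complex.I)])) := by
  simp only [star_single_one_dotProduct_mulVec_single_one]
  constructor
  · intro h
    have hUu : U ∈ unitaryGroup (Fin 2) ℂ := mem_unitaryGroup_iff'.mpr hU
    have hVu : V ∈ unitaryGroup (Fin 2) ℂ := mem_unitaryGroup_iff'.mpr hV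
    obtain ⟨φ₀, h₀⟩ := Complex.exists_exp_ofReal_mul_I_mul_eq_of_norm_eq (h 0)
    obtain ⟨φ₁, h₁⟩ := Complex.exists_exp_ofReal_mul_I_mul_eq_of_norm_eq (h 1)
    have hdet : ‖U.det‖ = ‖V.det‖ :=
      (CStarRing.norm_of_mem_unitary (E := ℂ) (det_of_mem_unitary hUu)).trans
        (CStarRing.norm_of_mem_unitary (E := ℂ) (det_of_mem_unitary hVu)).symm
    obtain ⟨ψ, hψ⟩ := Complex.exists_exp_ofReal_mul_I_mul_eq_of_norm_eq hdet
    refine ⟨(φ₀ - φ₁) / 2, (φ₀ + φ₁ - ψ) / 2, ψ / 2, ?_⟩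
    refine eq_of_mem_unitaryGroup_fin_two_of_col_zero_eq_of_det_eq hVu
      (Unitary.smul_mem_of_mem (Complex.exp_ofReal_mul_I_mem_unitary _)
        (mul_mem (mul_mem (Complex.diagonal_exp_mul_I_mem_unitaryGroup _) hUu)
          (Complex.diagonal_exp_mul_I_mem_unitaryGroup _))) (fun i => ?_) ?_
    · fin_cases i <;> simp [h₀, h₁, diagonal_mul, mul_diagonal] <;>
        rw [mul_right_comm, ← mul_assoc, ← Complex.exp_add, ← Complex.exp_add] <;> ring_nf
    · rw [det_smul, det_mul, det_mul, Complex.det_diagonal_exp_mul_I,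
        Complex.det_diagonal_exp_mul_I, hψ, Fintype.card_fin, ← Complex.exp_nat_mul]
      push_cast
      ring_nf
  · rintro ⟨α, β, θ, rfl⟩ i
    fin_cases i <;> simp [diagonal_mul, mul_diagonal, Complex.norm_exp]
end

section
/- Let A and B be N×N Hermitian matrices. Then e^{iA} = e^{iB} if and only if for every λ ∈ ℝ, the subspaces F^A_λ and F^B_λ of ℂ^N coincide, where F^M_λ = ⊕_{k ∈ ℤ} ker(M − (λ + 2πk)I). -/
/-! On an eigenvector of `A` with eigenvalue `μ`, `e^{iA}` acts as the scalar `e^{iμ}`, and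
`e^{iμ} = e^{iλ}` exactly when `μ ∈ λ + 2πℤ`. Expanding a vector in an eigenbasis of the
Hermitian matrix `A` therefore identifies `F^A_λ` with the eigenspace of `e^{iA}` for `e^{iλ}`,
so the periodic eigenspaces are determined by `e^{iA}`. Conversely they span `ℂ^N` and `e^{iA}`
acts on `F^A_λ` as the scalar `e^{iλ}`, so they determine `e^{iA}`. -/

open Matrix

/-- The "periodic eigenspace" `F^M_λ = ⨆ k ∈ ℤ, ker (M - (λ + 2πk) I)`. -/
noncomputable def periodicEigenspace {N : ℕ} (M : Matrix (Fin N) (Fin N) ℂ) (lam : ℝ) :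
    Submodule ℂ (Fin N → ℂ) :=
  ⨆ k : ℤ, LinearMap.ker (Matrix.toLin' (M - (((lam + 2 * Real.pi * k : ℝ) : ℂ)) • 1))

open NormedSpace Module.End
open scoped Nat

namespace Matrix

variable {m 𝕂 : Type*} [Fintype m] [DecidableEq m]

theorem pow_mulVec_of_mulVec_eq_smul {R : Type*} [CommSemiring R] {M : Matrix m m R}
    {v : m → R} {c : R} (h : M *ᵥ v = c • v) (n : ℕ) : M ^ n *ᵥ v = c ^ n • v := by
  induction n with
  | zero => simp
  | succ n ih => rw [pow_succ, ← mulVec_mulVec, h, mulVec_smul, ih, smul_smul, ← pow_succ']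

open scoped Norms.Operator in
theorem exp_mulVec_of_mulVec_eq_smul [RCLike 𝕂] {M : Matrix m m 𝕂} {v : m → 𝕂} {c : 𝕂}
    (h : M *ᵥ v = c • v) : exp M *ᵥ v = exp c • v := by
  have hM := (exp_series_hasSum_exp' (𝕂 := 𝕂) M).map (mulVec.addMonoidHomLeft v)
    (continuous_id.matrix_mulVec continuous_const)
  refine hM.unique ?_
  convert (exp_series_hasSum_exp' (𝕂 := 𝕂) c).smul_const v using 1
  ext n : 1
  change ((n !⁻¹ : 𝕂) • M ^ n) *ᵥ v = _
  rw [smul_mulVec, pow_mulVec_of_mulVec_eq_smul h, smul_smul, smul_eq_mul]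

theorem ker_toLin'_sub_smul_one {R : Type*} [CommRing R] (M : Matrix m m R) (c : R) :
    LinearMap.ker (toLin' (M - c • 1)) = eigenspace (toLin' M) c := by
  ext v
  simp [sub_eq_zero]

theorem eigenspace_toLin'_le_eigenspace_exp [RCLike 𝕂] (M : Matrix m m 𝕂) (c : 𝕂) :
    eigenspace (toLin' M) c ≤ eigenspace (toLin' (exp M)) (exp c) := fun v hv => by
  rw [mem_eigenspace_iff, toLin'_apply] at hv ⊢
  exact exp_mulVec_of_mulVec_eq_smul hv

theorem IsHermitian.exists_basis_toLin'_apply_eq_smul [RCLike 𝕂] {A : Matrix m m 𝕂}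
    (hA : A.IsHermitian) :
    ∃ (μ : m → ℝ) (w : Module.Basis m 𝕂 (m → 𝕂)), ∀ j, toLin' A (w j) = (μ j : 𝕂) • w j :=
  ⟨hA.eigenvalues, hA.eigenvectorBasis.toBasis.map (WithLp.linearEquiv 2 𝕂 (m → 𝕂)), fun j => by
    simp only [Module.Basis.map_apply, OrthonormalBasis.coe_toBasis, WithLp.linearEquiv_apply,
      toLin'_apply, ← RCLike.real_smul_eq_coe_smul (K := 𝕂)]
    exact hA.mulVec_eigenvectorBasis j⟩

end Matrix

theorem Module.Basis.repr_eq_zero_of_mem_eigenspace {ι K V : Type*} [Fintype ι] [Field K]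
    [AddCommGroup V] [Module K V] {b : Module.Basis ι K V} {f : Module.End K V} {d : ι → K}
    (hf : ∀ i, f (b i) = d i • b i) {μ : K} {v : V} (hv : v ∈ eigenspace f μ) {j : ι}
    (hj : d j ≠ μ) : b.repr v j = 0 := by
  classical
  have hrepr : b.repr (f v) j = d j * b.repr v j := by
    conv_lhs => rw [← b.sum_repr v]
    simp only [map_sum, map_smul, hf, smul_smul, b.repr_self]
    simp [Finsupp.single_apply, mul_comm]
  rw [mem_eigenspace_iff.mp hv, map_smul, Finsupp.smul_apply, smul_eq_mul] at hrepr
  have : (d j - μ) * b.repr v j = 0 := by linear_combination -hrepr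
  exact (mul_eq_zero.mp this).resolve_left (sub_ne_zero.mpr hj)

theorem Complex.exp_I_mul_ofReal_eq_iff {x y : ℝ} :
    Complex.exp (I * x) = Complex.exp (I * y) ↔ ∃ k : ℤ, x = y + 2 * Real.pi * k := by
  rw [mul_comm I, mul_comm I, ← Circle.coe_exp, ← Circle.coe_exp, Circle.coe_inj,
    Circle.exp_eq_exp]
  simp only [mul_comm]

section PeriodicEigenspace

open Complex

variable {N : ℕ} (M : Matrix (Fin N) (Fin N) ℂ)

theorem periodicEigenspace_eq_iSup_eigenspace (lam : ℝ) :
    periodicEigenspace M lam =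
      ⨆ k : ℤ, eigenspace (toLin' M) ((lam + 2 * Real.pi * k : ℝ) : ℂ) := by
  simp only [periodicEigenspace, ker_toLin'_sub_smul_one]

theorem eigenspace_le_periodicEigenspace (lam : ℝ) :
    eigenspace (toLin' M) (lam : ℂ) ≤ periodicEigenspace M lam := by
  rw [periodicEigenspace_eq_iSup_eigenspace]
  exact le_iSup_of_le 0 (by simp)

theorem periodicEigenspace_le_eigenspace_exp (lam : ℝ) :
    periodicEigenspace M lam ≤ eigenspace (toLin' (exp (I • M))) (Complex.exp (I * lam)) := by
  rw [periodicEigenspace_eq_iSup_eigenspace]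
  refine iSup_le fun k v hv => ?_
  have hIv : toLin' (I • M) v = (I * ((lam + 2 * Real.pi * k : ℝ) : ℂ)) • v := by
    rw [map_smul, LinearMap.smul_apply, mem_eigenspace_iff.mp hv, smul_smul]
  have hexp := eigenspace_toLin'_le_eigenspace_exp (I • M) _ (mem_eigenspace_iff.mpr hIv)
  rwa [← Complex.exp_eq_exp_ℂ, exp_I_mul_ofReal_eq_iff.mpr ⟨k, rfl⟩] at hexp

variable {M}

theorem Matrix.IsHermitian.eigenspace_exp_eq_periodicEigenspace (hM : M.IsHermitian) (lam : ℝ) :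
    eigenspace (toLin' (NormedSpace.exp (I • M))) (Complex.exp (I * lam)) =
      periodicEigenspace M lam := by
  refine le_antisymm (fun v hv => ?_) (periodicEigenspace_le_eigenspace_exp M lam)
  obtain ⟨μ, w, hw⟩ := hM.exists_basis_toLin'_apply_eq_smul
  have hexp (j : Fin N) : toLin' (NormedSpace.exp (I • M)) (w j) = Complex.exp (I * μ j) • w j :=
    mem_eigenspace_iff.mp <| periodicEigenspace_le_eigenspace_exp M (μ j) <|
      eigenspace_le_periodicEigenspace M (μ j) (mem_eigenspace_iff.mpr (hw j))
  rw [← w.sum_repr v]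
  refine Submodule.sum_mem _ fun j _ => ?_
  by_cases hj : Complex.exp (I * μ j) = Complex.exp (I * lam)
  · obtain ⟨k, hk⟩ := exp_I_mul_ofReal_eq_iff.mp hj
    rw [periodicEigenspace_eq_iSup_eigenspace]
    refine Submodule.smul_mem _ _ (Submodule.mem_iSup_of_mem k ?_)
    rw [← hk, mem_eigenspace_iff]
    exact hw j
  · rw [w.repr_eq_zero_of_mem_eigenspace hexp hv hj, zero_smul]
    exact zero_mem _

theorem Matrix.IsHermitian.iSup_periodicEigenspace_eq_top (hM : M.IsHermitian) :
    ⨆ lam : ℝ, periodicEigenspace M lam = ⊤ := by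
  obtain ⟨μ, w, hw⟩ := hM.exists_basis_toLin'_apply_eq_smul
  refine (Submodule.eq_top_iff_forall_basis_mem w).mpr fun j => ?_
  exact Submodule.mem_iSup_of_mem (μ j)
    (eigenspace_le_periodicEigenspace M (μ j) (mem_eigenspace_iff.mpr (hw j)))

end PeriodicEigenspace

theorem stmt_3 {N : ℕ} (A B : Matrix (Fin N) (Fin N) ℂ)
    (hA : Aᴴ = A) (hB : Bᴴ = B) :
    NormedSpace.exp (Complex.I • A) = NormedSpace.exp (Complex.I • B) ↔
      ∀ lam : ℝ, periodicEigenspace A lam = periodicEigenspace B lam := by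
  constructor
  · intro h lam
    rw [← IsHermitian.eigenspace_exp_eq_periodicEigenspace hA,
      ← IsHermitian.eigenspace_exp_eq_periodicEigenspace hB, h]
  · intro h
    apply toLin'.injective
    rw [← LinearMap.eqLocus_eq_top, eq_top_iff, ← IsHermitian.iSup_periodicEigenspace_eq_top hA,
      iSup_le_iff]
    intro lam v hv
    rw [LinearMap.mem_eqLocus,
      mem_eigenspace_iff.mp (periodicEigenspace_le_eigenspace_exp A lam hv),
      mem_eigenspace_iff.mp (periodicEigenspace_le_eigenspace_exp B lam (h lam ▸ hv))]
end

section
/- Let A be an N×N Hermitian matrix and λ ∈ ℝ. Then the periodic eigenspace F^A_λ = ⊕_{k∈ℤ} ker(A − (λ+2πk)I) equals the eigenspace ker(e^{iA} − e^{iλ} I) of the unitary matrix e^{iA}. -/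
/-!
Diagonalise `A` in an eigenbasis `(u j)` with real eigenvalues `μ j`; then `exp (I • A)` is
diagonal in the same basis, with eigenvalues `exp (μ j * I)`. For an operator that is diagonal in a
basis, the eigenspace for `c` is spanned by the basis vectors whose eigenvalue is `c`. Hence both
sides are spans of eigenvectors of `A`: those with `μ j ∈ λ + 2πℤ`, and those with
`exp (μ j * I) = exp (λ * I)`, and these two conditions coincide.
-/

open Matrix

theorem Module.End.eigenspace_eq_span_image_of_basis {R M ι : Type*} [CommRing R]
    [NoZeroDivisors R] [AddCommGroup M] [Module R M] (b : Module.Basis ι R M)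
    {f : Module.End R M} {μ : ι → R} (hf : ∀ i, f (b i) = μ i • b i) (c : R) :
    f.eigenspace c = Submodule.span R (b '' {i | μ i = c}) := by
  have hrepr : ∀ x i, b.repr (f x) i = μ i * b.repr x i := fun x i =>
    LinearMap.congr_fun (f := b.coord i ∘ₗ f) (g := μ i • b.coord i) (b.ext fun j => by
      rcases eq_or_ne j i with rfl | hji
      · simp [hf]
      · simp [hf, hji]) x
  ext x
  rw [Module.End.mem_eigenspace_iff, b.mem_span_image, ← b.repr.injective.eq_iff,
    Finsupp.ext_iff]
  simp only [hrepr, map_smul, Finsupp.smul_apply, smul_eq_mul, Set.subset_def,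
    Finset.mem_coe, Finsupp.mem_support_iff, Set.mem_ofPred_eq]
  refine forall_congr' fun i => ?_
  rw [← sub_eq_zero, ← sub_mul, mul_eq_zero, sub_eq_zero, or_iff_not_imp_right]

open scoped Matrix.Norms.Operator in
theorem Matrix.exp_mulVec_of_mulVec_eq_smul_s4 {𝕂 m : Type*} [RCLike 𝕂] [Fintype m]
    [DecidableEq m] {M : Matrix m m 𝕂} {x : m → 𝕂} {c : 𝕂} (h : M *ᵥ x = c • x) :
    NormedSpace.exp M *ᵥ x = NormedSpace.exp c • x := by
  have hpow : ∀ n : ℕ, M ^ n *ᵥ x = c ^ n • x := by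
    intro n
    induction n with
    | zero => simp
    | succ n ih => rw [pow_succ, ← mulVec_mulVec, h, mulVec_smul, ih, smul_smul, pow_succ']
  let applyAt : Matrix m m 𝕂 →L[𝕂] (m → 𝕂) :=
    LinearMap.toContinuousLinearMap ((LinearMap.applyₗ x).comp Matrix.toLin'.toLinearMap)
  have hM := (NormedSpace.exp_series_hasSum_exp' (𝕂 := 𝕂) M).mapL applyAt
  have hc := (NormedSpace.exp_series_hasSum_exp' (𝕂 := 𝕂) c).smul_const x
  simp only [applyAt, LinearMap.coe_toContinuousLinearMap', LinearMap.coe_comp,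
    Function.comp_apply, LinearEquiv.coe_coe, LinearMap.applyₗ_apply_apply, toLin'_apply,
    smul_mulVec, hpow, smul_smul] at hM hc
  exact hM.unique hc

theorem Matrix.ker_toLin'_sub_smul_one_s4 {R m : Type*} [CommRing R] [Fintype m] [DecidableEq m]
    (M : Matrix m m R) (c : R) :
    LinearMap.ker (toLin' (M - c • 1)) = Module.End.eigenspace (toLin' M) c := by
  rw [Module.End.eigenspace_def, map_sub, map_smul, toLin'_one, Module.End.one_eq_id]

theorem Complex.exp_ofReal_mul_I_eq_iff {s t : ℝ} :
    exp (s * I) = exp (t * I) ↔ ∃ k : ℤ, s = t + 2 * Real.pi * k := by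
  rw [exp_eq_exp_iff_exists_int]
  refine exists_congr fun k => ?_
  rw [show (t : ℂ) * I + k * (2 * Real.pi * I) = ((t + 2 * Real.pi * k : ℝ) : ℂ) * I by
    push_cast; ring, mul_left_inj' I_ne_zero, ofReal_inj]

theorem stmt_4 {N : ℕ} (A : Matrix (Fin N) (Fin N) ℂ) (hA : Aᴴ = A) (lam : ℝ) :
    periodicEigenspace A lam =
      LinearMap.ker (Matrix.toLin'
        (NormedSpace.exp (Complex.I • A) - Complex.exp (lam * Complex.I) • 1)) := by
  have hA : A.IsHermitian := hA
  let b := hA.eigenvectorBasis.toBasis.map (WithLp.linearEquiv 2 ℂ (Fin N → ℂ))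
  have hAb : ∀ j, toLin' A (b j) = (hA.eigenvalues j : ℂ) • b j := fun j => by
    simp [b, hA.mulVec_eigenvectorBasis]
  have hEb : ∀ j, toLin' (NormedSpace.exp (Complex.I • A)) (b j) =
      Complex.exp (hA.eigenvalues j * Complex.I) • b j := fun j => by
    have hIAb : (Complex.I • A) *ᵥ b j = (hA.eigenvalues j * Complex.I) • b j := by
      rw [smul_mulVec, ← toLin'_apply, hAb, smul_smul, mul_comm]
    rw [toLin'_apply, exp_mulVec_of_mulVec_eq_smul_s4 hIAb, Complex.exp_eq_exp_ℂ]
  calc periodicEigenspace A lam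
      = ⨆ k : ℤ, Submodule.span ℂ (b '' {j | hA.eigenvalues j = lam + 2 * Real.pi * k}) := by
        simp only [periodicEigenspace, ker_toLin'_sub_smul_one_s4,
          Module.End.eigenspace_eq_span_image_of_basis b hAb, Complex.ofReal_inj]
    _ = Submodule.span ℂ (b '' {j | ∃ k : ℤ, hA.eigenvalues j = lam + 2 * Real.pi * k}) := by
        rw [← Submodule.span_iUnion, ← Set.image_iUnion, Set.ofPred_exists]
    _ = _ := by
        simp only [ker_toLin'_sub_smul_one_s4, Module.End.eigenspace_eq_span_image_of_basis b hEb,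
          Complex.exp_ofReal_mul_I_eq_iff]
end

section
/- Let N ≥ 2 and suppose the pair of sets 𝓘 = unit sphere of ℂ^N and 𝓕 = unit sphere of ℂ^N. If U, V are unitary N×N matrices with |a* U b| = |a* V b| for all a ∈ 𝓕 and b ∈ 𝓘, and additionally det U = det V = 1 (both special unitary) and ‖U − I‖ and ‖V − I‖ are both strictly smaller than the distance from 1 to any other N-th root of unity in ℂ times 1/2 (i.e., both sufficiently close to the identity), then U = V. -/
/-!
Write `V = W U` with `W = V Uᴴ`. Since `U` maps unit vectors onto unit vectors, `W` leaves every
transition amplitude `|a* b|` between unit vectors unchanged. Testing on basis vectors makes `W`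
diagonal with unimodular entries, and testing on `(eᵢ + eⱼ)/√2` shows `|Wᵢᵢ + Wⱼⱼ| = 2`, which by
strict convexity of `ℂ` forces `Wᵢᵢ = Wⱼⱼ`. Hence `V = c U`, and `det V = det U = 1` gives
`c ^ N = 1`. Finally `‖c - 1‖ = ‖V - U‖ < |ζ - 1|` for `ζ = exp (2πi/N)`, while every `N`-th root of
unity `ζᵏ ≠ 1` satisfies `|ζᵏ - 1| = 2 sin (kπ/N) ≥ 2 sin (π/N) = |ζ - 1|` by concavity of `sin`
on `[0, π]`; so `c = 1`.
-/

open Matrix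
open scoped Matrix.Norms.L2Operator

open Complex in
theorem norm_exp_two_pi_I_div_sub_one_le_norm_pow_sub_one {N k : ℕ} (hk0 : 0 < k) (hkN : k < N) :
    ‖exp (2 * Real.pi * I / N) - 1‖ ≤ ‖exp (2 * Real.pi * I / N) ^ k - 1‖ := by
  have hN : (0 : ℝ) < N := by exact_mod_cast hk0.trans hkN
  have hnorm (m : ℕ) (hm : m ≤ N) :
      ‖exp (2 * Real.pi * I / N) ^ m - 1‖ = 2 * Real.sin (m * Real.pi / N) := by
    rw [← exp_nat_mul, show (m * (2 * Real.pi * I / N) : ℂ) = I * ↑(2 * (m * Real.pi / N)) by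
      push_cast; ring, norm_exp_I_mul_ofReal_sub_one, mul_div_cancel_left₀ _ two_ne_zero,
      norm_mul, Real.norm_two, Real.norm_of_nonneg]
    refine Real.sin_nonneg_of_nonneg_of_le_pi (by positivity) ?_
    rw [div_le_iff₀ hN, mul_comm]
    gcongr
  have hx : Real.pi / N ≤ k * Real.pi / N := by
    gcongr; exact le_mul_of_one_le_left Real.pi_pos.le (by exact_mod_cast hk0)
  have hy : k * Real.pi / N ≤ Real.pi - Real.pi / N := by
    rw [div_le_iff₀ hN, sub_mul, div_mul_cancel₀ _ hN.ne']
    have : (k : ℝ) + 1 ≤ N := by exact_mod_cast hkN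
    nlinarith [Real.pi_pos]
  have hsin : Real.sin (Real.pi / N) ≤ Real.sin (k * Real.pi / N) := by
    have : 0 ≤ Real.pi / N := by positivity
    simpa [Real.sin_pi_sub] using strictConcaveOn_sin_Icc.concaveOn.min_le_of_mem_Icc
      ⟨by positivity, by linarith⟩ ⟨by linarith, by linarith⟩ ⟨hx, hy⟩
  have h1 := hnorm 1 (by omega)
  rw [pow_one, Nat.cast_one, one_mul] at h1
  rw [h1, hnorm k hkN.le]
  linarith

open Complex in
theorem eq_one_of_pow_eq_one_of_norm_sub_one_lt {N : ℕ} (hN : 0 < N) {c : ℂ} (hc : c ^ N = 1)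
    (hclose : ‖c - 1‖ < ‖exp (2 * Real.pi * I / N) - 1‖) : c = 1 := by
  have : NeZero N := ⟨hN.ne'⟩
  obtain ⟨k, hkN, rfl⟩ := (isPrimitiveRoot_exp N hN.ne').eq_pow_of_pow_eq_one hc
  rcases Nat.eq_zero_or_pos k with rfl | hk0
  · exact pow_zero _
  · exact absurd hclose (norm_exp_two_pi_I_div_sub_one_le_norm_pow_sub_one hk0 hkN).not_gt

namespace Matrix

variable {ι : Type*} [Fintype ι]

theorem star_smul_dotProduct_mulVec_smul (A : Matrix ι ι ℂ) (r : ℂ) (u : ι → ℂ) :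
    star (r • u) ⬝ᵥ A *ᵥ (r • u) = star r * r * (star u ⬝ᵥ A *ᵥ u) := by
  rw [star_smul, mulVec_smul, smul_dotProduct, dotProduct_smul, smul_eq_mul, smul_eq_mul,
    mul_assoc]

/-- `W` has the same ideal data as the identity matrix. -/
def PreservesTransitionAmplitudes (W : Matrix ι ι ℂ) : Prop :=
  ∀ a b : ι → ℂ, star a ⬝ᵥ a = 1 → star b ⬝ᵥ b = 1 → ‖star a ⬝ᵥ W *ᵥ b‖ = ‖star a ⬝ᵥ b‖

variable [DecidableEq ι]

theorem star_single_add_single_dotProduct_mulVec (A : Matrix ι ι ℂ) (i j : ι) :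
    star (Pi.single i 1 + Pi.single j 1 : ι → ℂ) ⬝ᵥ A *ᵥ (Pi.single i 1 + Pi.single j 1) =
      A i i + A j j + (A i j + A j i) := by
  simp only [star_add, Pi.star_single, star_one, mulVec_add, mulVec_single_one, dotProduct_add,
    add_dotProduct, single_dotProduct, one_mul, col_apply]
  ring

theorem PreservesTransitionAmplitudes.norm_apply_eq_norm_one_apply {W : Matrix ι ι ℂ}
    (hW : W.PreservesTransitionAmplitudes) (i j : ι) :
    ‖W i j‖ = ‖(1 : Matrix ι ι ℂ) i j‖ := by
  simpa [Pi.star_single, mulVec_single, Pi.single_apply, one_apply, eq_comm] using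
    hW (Pi.single i 1) (Pi.single j 1) (by simp [Pi.star_single]) (by simp [Pi.star_single])

theorem PreservesTransitionAmplitudes.apply_self_eq_apply_self {W : Matrix ι ι ℂ}
    (hW : W.PreservesTransitionAmplitudes) (i j : ι) :
    W i i = W j j := by
  rcases eq_or_ne i j with rfl | hij
  · rfl
  have hoff (k l : ι) (hkl : k ≠ l) : W k l = 0 := by
    simpa [one_apply_ne hkl] using hW.norm_apply_eq_norm_one_apply k l
  have hdiag (k : ι) : ‖W k k‖ = 1 := by simpa using hW.norm_apply_eq_norm_one_apply k k
  set r : ℂ := (((√2)⁻¹ : ℝ) : ℂ)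
  have hr : star r * r = 2⁻¹ := by
    rw [Complex.star_def, Complex.conj_ofReal, ← Complex.ofReal_mul, ← mul_inv,
      Real.mul_self_sqrt zero_le_two]
    norm_num
  set v : ι → ℂ := r • (Pi.single i 1 + Pi.single j 1)
  have hv : star v ⬝ᵥ v = 1 := by
    nth_rw 2 [← one_mulVec v]
    rw [star_smul_dotProduct_mulVec_smul, hr, star_single_add_single_dotProduct_mulVec]
    norm_num [one_apply_ne hij, one_apply_ne hij.symm]
  have hWv : star v ⬝ᵥ W *ᵥ v = 2⁻¹ * (W i i + W j j) := by
    rw [star_smul_dotProduct_mulVec_smul, hr, star_single_add_single_dotProduct_mulVec,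
      hoff i j hij, hoff j i hij.symm, add_zero, add_zero]
  have hsum : ‖W i i + W j j‖ = ‖W i i‖ + ‖W j j‖ := by
    have := hW v v hv hv
    rw [hWv, hv, norm_mul] at this
    rw [hdiag, hdiag]
    norm_num at this
    linarith
  exact eq_of_norm_eq_of_norm_add_eq ((hdiag i).trans (hdiag j).symm) hsum

theorem PreservesTransitionAmplitudes.exists_eq_smul_one {W : Matrix ι ι ℂ}
    (hW : W.PreservesTransitionAmplitudes) :
    ∃ c : ℂ, W = c • 1 := by
  cases isEmpty_or_nonempty ι with
  | inl _ => exact ⟨1, Subsingleton.elim _ _⟩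
  | inr hne =>
    obtain ⟨i₀⟩ := hne
    refine ⟨W i₀ i₀, ext fun i j => ?_⟩
    rcases eq_or_ne i j with rfl | hij
    · simp [hW.apply_self_eq_apply_self i i₀]
    · simpa [one_apply_ne hij] using hW.norm_apply_eq_norm_one_apply i j

theorem exists_eq_smul_of_norm_dotProduct_mulVec_eq {U V : Matrix ι ι ℂ} (hU : Uᴴ * U = 1)
    (h : ∀ a b : ι → ℂ, star a ⬝ᵥ a = 1 → star b ⬝ᵥ b = 1 →
      ‖star a ⬝ᵥ U *ᵥ b‖ = ‖star a ⬝ᵥ V *ᵥ b‖) :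
    ∃ c : ℂ, V = c • U := by
  have hU' : U * Uᴴ = 1 := mul_eq_one_comm.mp hU
  have hW : (V * Uᴴ).PreservesTransitionAmplitudes := fun a b ha hb => by
    have hb' : star (Uᴴ *ᵥ b) ⬝ᵥ Uᴴ *ᵥ b = 1 := by
      rwa [star_mulVec, conjTranspose_conjTranspose, ← dotProduct_mulVec, mulVec_mulVec, hU',
        one_mulVec]
    simpa [mulVec_mulVec, hU'] using (h a (Uᴴ *ᵥ b) ha hb').symm
  obtain ⟨c, hc⟩ := hW.exists_eq_smul_one
  refine ⟨c, ?_⟩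
  rw [← smul_one_mul, ← hc, Matrix.mul_assoc, hU, Matrix.mul_one]

end Matrix

theorem stmt_15_general {N : ℕ} (hN : 2 ≤ N) (U V : Matrix (Fin N) (Fin N) ℂ)
    (hU : Uᴴ * U = 1)
    (hdetU : U.det = 1) (hdetV : V.det = 1)
    (h : ∀ a b : Fin N → ℂ, star a ⬝ᵥ a = 1 → star b ⬝ᵥ b = 1 →
      ‖star a ⬝ᵥ U.mulVec b‖ = ‖star a ⬝ᵥ V.mulVec b‖)
    (hUclose : ‖U - 1‖ < ‖Complex.exp (2 * Real.pi * Complex.I / N) - 1‖ / 2)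
    (hVclose : ‖V - 1‖ < ‖Complex.exp (2 * Real.pi * Complex.I / N) - 1‖ / 2) :
    U = V := by
  obtain ⟨c, rfl⟩ := exists_eq_smul_of_norm_dotProduct_mulVec_eq hU h
  have hc : c ^ N = 1 := by simpa [det_smul, hdetU] using hdetV
  have : Nonempty (Fin N) := ⟨⟨0, by omega⟩⟩
  have hnormU : ‖U‖ = 1 :=
    CStarRing.norm_of_mem_unitary (Unitary.mem_iff.mpr ⟨hU, mul_eq_one_comm.mp hU⟩)
  have hclose : ‖c - 1‖ < ‖Complex.exp (2 * Real.pi * Complex.I / N) - 1‖ :=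
    calc ‖c - 1‖ = ‖(c - 1) • U‖ := by rw [norm_smul, hnormU, mul_one]
      _ = ‖c • U - U‖ := by rw [sub_smul, one_smul]
      _ ≤ ‖c • U - 1‖ + ‖U - 1‖ := by
        simpa [norm_sub_rev 1 U] using norm_sub_le_norm_sub_add_norm_sub (c • U) 1 U
      _ < _ := by linarith
  rw [eq_one_of_pow_eq_one_of_norm_sub_one_lt (by omega) hc hclose, one_smul]

/-- Two special unitary matrices close to the identity (in operator norm) giving the same
ideal data are equal. -/
theorem stmt_15 {N : ℕ} (hN : 2 ≤ N) (U V : Matrix (Fin N) (Fin N) ℂ)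
    (hU : Uᴴ * U = 1) (hV : Vᴴ * V = 1)
    (hdetU : U.det = 1) (hdetV : V.det = 1)
    (h : ∀ a b : Fin N → ℂ, star a ⬝ᵥ a = 1 → star b ⬝ᵥ b = 1 →
      ‖star a ⬝ᵥ U.mulVec b‖ = ‖star a ⬝ᵥ V.mulVec b‖)
    (hUclose : ‖U - 1‖ < ‖Complex.exp (2 * Real.pi * Complex.I / N) - 1‖ / 2)
    (hVclose : ‖V - 1‖ < ‖Complex.exp (2 * Real.pi * Complex.I / N) - 1‖ / 2) :
    U = V :=
  stmt_15_general hN U V hU hdetU hdetV h hUclose hVclose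
end
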